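/- The Euclidean volume of the polytope {(z_1,…,z_5) ∈ ℝ^5 : 0 ≤ z_1 ≤ 1, 0 ≤ z_{i} − z_{i−1} ≤ 1 for i = 2,…,5, 2 ≤ z_5 ≤ 3, 1 ≤ z_4 − z_1 ≤ 2} equals 54/120 = 9/20. -/

import Mathlib

open MeasureTheory Finset ENNReal

/-- One-line notation value: `ov w i` is `w_i ∈ {1,…,d}` for `1 ≤ i ≤ d`,
and `0` otherwise (in particular `w_0 = 0`). -/
def ov {d : ℕ} (w : Equiv.Perm (Fin d)) (i : ℕ) : ℕ :=
  if h : 1 ≤ i ∧ i ≤ d then (w ⟨i - 1, by omega⟩).val + 1 else 0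

/-- Number of descents of the consecutive subword `w_a w_{a+1} ⋯ w_b`. -/
def des {d : ℕ} (w : Equiv.Perm (Fin d)) (a b : ℕ) : ℕ :=
  ((Finset.Ico a b).filter (fun ℓ => ov w (ℓ + 1) < ov w ℓ)).card

/-- `zcoord z i` is the `i`-th coordinate `z_i` (1-based), with `z_0 = 0`. -/
noncomputable def zcoord {m : ℕ} (z : Fin m → ℝ) (i : ℕ) : ℝ :=
  if h : 1 ≤ i ∧ i ≤ m then z ⟨i - 1, by omega⟩ else 0

/-- `Ycoord y i` is the 0-indexed coordinate `y_i`. -/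
noncomputable def Ycoord {d : ℕ} (y : Fin d → ℝ) (i : ℕ) : ℝ :=
  if h : i < d then y ⟨i, h⟩ else 0

/-!
Shearing `z₄ ↦ d = z₄ - z₁` preserves volume and turns every constraint into a unit-box
condition between two coordinates, plus `1 ≤ d ≤ 2`. Integrating out `z₅` and `z₂` produces
tent functions `1 - |u|` (the convolution of two unit boxes); integrating `z₃` and then `z₁`
against these tents produces, each time, `3/4 - (d - 3/2)²`, the density of a sum of three
uniform variables on `[1, 2]`. The volume is therefore `∫₁² (3/4 - (d - 3/2)²)² dd = 9/20`.
-/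

open Classical in
noncomputable def iverson (p : Prop) : ℝ≥0∞ := if p then 1 else 0

lemma iverson_and (p q : Prop) : iverson (p ∧ q) = iverson p * iverson q := by
  by_cases hp : p <;> by_cases hq : q <;> simp [iverson, hp, hq]

@[fun_prop]
lemma measurable_iverson {α : Type*} [MeasurableSpace α] {p : α → Prop}
    (hp : MeasurableSet {x | p x}) : Measurable fun x => iverson (p x) :=
  Measurable.ite hp measurable_const measurable_const

lemma lintegral_iverson_mem {α : Type*} [MeasurableSpace α] {μ : Measure α} {s : Set α}
    (hs : MeasurableSet s) : ∫⁻ x, iverson (x ∈ s) ∂μ = μ s := by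
  rw [← lintegral_indicator_one hs]
  congr with x

lemma lintegral_iverson_mem_Icc_mul_ofReal {a b : ℝ} (hab : a ≤ b) {g : ℝ → ℝ}
    (hg : ContinuousOn g (Set.Icc a b)) (hg₀ : ∀ t ∈ Set.Icc a b, 0 ≤ g t) :
    ∫⁻ t, iverson (t ∈ Set.Icc a b) * ENNReal.ofReal (g t) =
      ENNReal.ofReal (∫ t in a..b, g t) := by
  have hind : (fun t => iverson (t ∈ Set.Icc a b) * ENNReal.ofReal (g t)) =
      (Set.Icc a b).indicator (fun t => ENNReal.ofReal (g t)) := by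
    ext t
    by_cases ht : t ∈ Set.Icc a b <;> simp [iverson, ht]
  rw [hind, lintegral_indicator measurableSet_Icc, intervalIntegral.integral_of_le hab,
    ← integral_Icc_eq_integral_Ioc, ofReal_integral_eq_lintegral_ofReal hg.integrableOn_Icc
      ((ae_restrict_iff' measurableSet_Icc).2 (ae_of_all _ hg₀))]

noncomputable def unitBox (a t : ℝ) : ℝ≥0∞ := iverson (t ∈ Set.Icc a (a + 1))

noncomputable def tent (u : ℝ) : ℝ≥0∞ := ENNReal.ofReal (1 - |u|)

@[fun_prop]
lemma measurable_unitBox {α : Type*} [MeasurableSpace α] {a t : α → ℝ} (ha : Measurable a)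
    (ht : Measurable t) : Measurable fun x => unitBox (a x) (t x) :=
  measurable_iverson (measurableSet_le ha ht |>.inter (measurableSet_le ht (ha.add_const 1)))

@[fun_prop]
lemma measurable_tent {α : Type*} [MeasurableSpace α] {u : α → ℝ} (hu : Measurable u) :
    Measurable fun x => tent (u x) := by
  unfold tent
  fun_prop

lemma unitBox_swap (a t : ℝ) : unitBox t a = unitBox (a - 1) t := by
  simp only [unitBox, sub_add_cancel, Set.mem_Icc]
  exact congrArg iverson (propext ⟨fun h => ⟨by linarith, h.1⟩, fun h => ⟨h.2, by linarith⟩⟩)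

lemma tent_sub_comm (a b : ℝ) : tent (a - b) = tent (b - a) := by
  rw [tent, tent, abs_sub_comm]

lemma lintegral_unitBox_mul_unitBox (a b : ℝ) : ∫⁻ t, unitBox a t * unitBox b t = tent (a - b) := by
  simp only [unitBox, ← iverson_and, ← Set.mem_inter_iff]
  rw [lintegral_iverson_mem (measurableSet_Icc.inter measurableSet_Icc), Set.Icc_inter_Icc,
    Real.volume_Icc, tent, min_add_add_right, ← max_sub_min_eq_abs']
  congr 1
  ring

lemma integral_one_sub_abs {v : ℝ} (h₁ : -1 ≤ v) (h₂ : v ≤ 0) :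
    ∫ s in v..v + 1, (1 - |s|) = 3 / 4 - (v + 1 / 2) ^ 2 := by
  have hint : ∀ p q : ℝ, IntervalIntegrable (fun s : ℝ => 1 - |s|) volume p q :=
    fun p q => (by fun_prop : Continuous fun s : ℝ => 1 - |s|).intervalIntegrable p q
  have hneg : ∫ s in v..0, (1 - |s|) = ∫ s in v..0, (1 + s) := by
    refine intervalIntegral.integral_congr fun s hs => ?_
    rw [Set.uIcc_of_le h₂] at hs
    rw [abs_of_nonpos hs.2]
    ring
  have hpos : ∫ s in (0 : ℝ)..v + 1, (1 - |s|) = ∫ s in (0 : ℝ)..v + 1, (1 - s) := by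
    refine intervalIntegral.integral_congr fun s hs => ?_
    rw [Set.uIcc_of_le (by linarith)] at hs
    rw [abs_of_nonneg hs.1]
  rw [← intervalIntegral.integral_add_adjacent_intervals (hint v 0) (hint 0 (v + 1)), hneg, hpos,
    intervalIntegral.integral_add intervalIntegrable_const intervalIntegral.intervalIntegrable_id,
    intervalIntegral.integral_sub intervalIntegrable_const intervalIntegral.intervalIntegrable_id]
  simp
  ring

lemma lintegral_unitBox_mul_tent {a b : ℝ} (h₁ : -1 ≤ a - b) (h₂ : a - b ≤ 0) :
    ∫⁻ t, unitBox a t * tent (t - b) = ENNReal.ofReal (3 / 4 - (a - b + 1 / 2) ^ 2) := by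
  have htent : ∀ t ∈ Set.Icc a (a + 1), 0 ≤ 1 - |t - b| := fun t ht =>
    sub_nonneg.2 (abs_le.2 ⟨by linarith [ht.1], by linarith [ht.2]⟩)
  simp only [unitBox, tent]
  rw [lintegral_iverson_mem_Icc_mul_ofReal (by linarith) (by fun_prop) htent,
    intervalIntegral.integral_comp_sub_right (fun s => 1 - |s|), add_sub_right_comm,
    integral_one_sub_abs h₁ h₂]

lemma measurePreserving_update_add {ι : Type*} [Fintype ι] [DecidableEq ι] {i j : ι}
    (hij : i ≠ j) : MeasurePreserving (fun x : ι → ℝ => Function.update x i (x i + x j)) := by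
  convert Real.volume_preserving_transvectionStruct ⟨i, j, hij, 1⟩ using 1
  ext x k
  by_cases hk : k = i <;>
    simp [Matrix.TransvectionStruct.toMatrix, Matrix.transvection, Matrix.single_mulVec, hk]

lemma integral_sq_three_div_four_sub_sq :
    ∫ t in (1 : ℝ)..2, (3 / 4 - (t - 3 / 2) ^ 2) ^ 2 = 9 / 20 := by
  have hexpand : (fun s : ℝ => (3 / 4 - s ^ 2) ^ 2) = fun s => 9 / 16 - 3 / 2 * s ^ 2 + s ^ 4 := by
    ext
    ring
  have hint : ∀ f : ℝ → ℝ, Continuous f → IntervalIntegrable f volume (1 - 3 / 2) (2 - 3 / 2) :=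
    fun f hf => hf.intervalIntegrable _ _
  rw [intervalIntegral.integral_comp_sub_right (fun s => (3 / 4 - s ^ 2) ^ 2), hexpand,
    intervalIntegral.integral_add (hint _ (by fun_prop)) (hint _ (by fun_prop)),
    intervalIntegral.integral_sub (hint _ (by fun_prop)) (hint _ (by fun_prop))]
  norm_num

def alcovedPolytope : Set (Fin 5 → ℝ) := {z : Fin 5 → ℝ |
      (0 ≤ z 0 ∧ z 0 ≤ 1) ∧
      (0 ≤ z 1 - z 0 ∧ z 1 - z 0 ≤ 1) ∧
      (0 ≤ z 2 - z 1 ∧ z 2 - z 1 ≤ 1) ∧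
      (0 ≤ z 3 - z 2 ∧ z 3 - z 2 ≤ 1) ∧
      (0 ≤ z 4 - z 3 ∧ z 4 - z 3 ≤ 1) ∧
      (2 ≤ z 4 ∧ z 4 ≤ 3) ∧
      (1 ≤ z 3 - z 0 ∧ z 3 - z 0 ≤ 2)}

/- `f₀` is the indicator of the polytope in the coordinates `(z₁, z₂, z₃, z₄ - z₁, z₅)`, and each
`fₖ₊₁` is `fₖ` with one coordinate integrated out (`z₅`, `z₂`, `z₃`, `z₁` in turn). -/

noncomputable def f₀ (x : Fin 5 → ℝ) : ℝ≥0∞ :=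
  iverson (x 3 ∈ Set.Icc 1 2) * unitBox 0 (x 0) * unitBox (x 0) (x 1) * unitBox (x 1) (x 2) *
    unitBox (x 2) (x 3 + x 0) * (unitBox (x 3 + x 0) (x 4) * unitBox 2 (x 4))

noncomputable def f₁ (x : Fin 5 → ℝ) : ℝ≥0∞ :=
  iverson (x 3 ∈ Set.Icc 1 2) * unitBox 0 (x 0) * unitBox (x 2) (x 3 + x 0) *
    tent (x 3 + x 0 - 2) * (unitBox (x 0) (x 1) * unitBox (x 1) (x 2))

noncomputable def f₂ (x : Fin 5 → ℝ) : ℝ≥0∞ :=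
  iverson (x 3 ∈ Set.Icc 1 2) * unitBox 0 (x 0) * tent (x 3 + x 0 - 2) *
    (unitBox (x 2) (x 3 + x 0) * tent (x 2 - (x 0 + 1)))

noncomputable def f₃ (x : Fin 5 → ℝ) : ℝ≥0∞ :=
  iverson (x 3 ∈ Set.Icc 1 2) * ENNReal.ofReal (3 / 4 - (x 3 - 3 / 2) ^ 2) *
    (unitBox 0 (x 0) * tent (x 3 + x 0 - 2))

noncomputable def f₄ (x : Fin 5 → ℝ) : ℝ≥0∞ :=
  iverson (x 3 ∈ Set.Icc 1 2) * ENNReal.ofReal ((3 / 4 - (x 3 - 3 / 2) ^ 2) ^ 2)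

lemma volume_alcovedPolytope_eq_lintegral_f₀ : volume alcovedPolytope = ∫⁻ x, f₀ x := by
  have hP : MeasurableSet alcovedPolytope := by
    unfold alcovedPolytope
    measurability
  rw [← lintegral_iverson_mem hP,
    ← (measurePreserving_update_add (by decide : (3 : Fin 5) ≠ 0)).lintegral_comp
      (measurable_iverson (p := (· ∈ alcovedPolytope)) hP)]
  congr with x
  simp only [f₀, unitBox, ← iverson_and]
  refine congrArg iverson (propext ?_)
  simp only [alcovedPolytope, Set.mem_ofPred_eq, Set.mem_Icc, Function.update_self, ne_eq,
    Fin.reduceEq, not_false_eq_true, Function.update_of_ne]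
  grind

lemma measurable_f₀ : Measurable f₀ := by unfold f₀; fun_prop (disch := measurability)

lemma measurable_f₁ : Measurable f₁ := by unfold f₁; fun_prop (disch := measurability)

lemma measurable_f₂ : Measurable f₂ := by unfold f₂; fun_prop (disch := measurability)

lemma measurable_f₃ : Measurable f₃ := by unfold f₃; fun_prop (disch := measurability)

lemma lintegral_f₀_update : (fun x => ∫⁻ t, f₀ (Function.update x 4 t)) = f₁ := by
  ext x
  simp only [f₀, Function.update_self, ne_eq, Fin.reduceEq, not_false_eq_true,
    Function.update_of_ne]
  rw [lintegral_const_mul _ (by fun_prop), lintegral_unitBox_mul_unitBox, f₁]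
  ring

lemma lintegral_f₁_update : (fun x => ∫⁻ t, f₁ (Function.update x 1 t)) = f₂ := by
  ext x
  simp only [f₁, Function.update_self, ne_eq, Fin.reduceEq, not_false_eq_true,
    Function.update_of_ne, unitBox_swap (x 2)]
  rw [lintegral_const_mul _ (by fun_prop), lintegral_unitBox_mul_unitBox, tent_sub_comm (x 0), f₂]
  ring_nf

lemma lintegral_f₂_update : (fun x => ∫⁻ t, f₂ (Function.update x 2 t)) = f₃ := by
  ext x
  by_cases hx : x 3 ∈ Set.Icc 1 2
  · simp only [f₂, Function.update_self, ne_eq, Fin.reduceEq, not_false_eq_true,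
      Function.update_of_ne, unitBox_swap (x 3 + x 0)]
    rw [lintegral_const_mul _ (by fun_prop),
      lintegral_unitBox_mul_tent (by linarith [hx.1]) (by linarith [hx.2]), f₃]
    ring_nf
  · simp [f₂, f₃, iverson, hx]

lemma lintegral_f₃_update : (fun x => ∫⁻ t, f₃ (Function.update x 0 t)) = f₄ := by
  ext x
  by_cases hx : x 3 ∈ Set.Icc 1 2
  · have hshift : ∀ t, x 3 + t - 2 = t - (2 - x 3) := fun t => by ring
    simp only [f₃, Function.update_self, ne_eq, Fin.reduceEq, not_false_eq_true,
      Function.update_of_ne, hshift]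
    rw [lintegral_const_mul _ (by fun_prop),
      lintegral_unitBox_mul_tent (by linarith [hx.1]) (by linarith [hx.2]), mul_assoc,
      ← ENNReal.ofReal_mul (by nlinarith [hx.1, hx.2]), f₄]
    ring_nf
  · simp [f₃, f₄, iverson, hx]

lemma lintegral_f₄_update (x : Fin 5 → ℝ) : ∫⁻ t, f₄ (Function.update x 3 t) = 54 / 120 := by
  simp only [f₄, Function.update_self]
  rw [lintegral_iverson_mem_Icc_mul_ofReal (by norm_num) (by fun_prop) fun t _ => sq_nonneg _,
    integral_sq_three_div_four_sub_sq, show (9 / 20 : ℝ) = 54 / 120 by norm_num,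
    ENNReal.ofReal_div_of_pos (by norm_num)]
  norm_num

theorem stmt17 :
    volume {z : Fin 5 → ℝ |
      (0 ≤ z 0 ∧ z 0 ≤ 1) ∧
      (0 ≤ z 1 - z 0 ∧ z 1 - z 0 ≤ 1) ∧
      (0 ≤ z 2 - z 1 ∧ z 2 - z 1 ≤ 1) ∧
      (0 ≤ z 3 - z 2 ∧ z 3 - z 2 ≤ 1) ∧
      (0 ≤ z 4 - z 3 ∧ z 4 - z 3 ≤ 1) ∧
      (2 ≤ z 4 ∧ z 4 ≤ 3) ∧
      (1 ≤ z 3 - z 0 ∧ z 3 - z 0 ≤ 2)} = 54 / 120 := by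
  show volume alcovedPolytope = 54 / 120
  rw [volume_alcovedPolytope_eq_lintegral_f₀, volume_pi, lintegral_eq_lmarginal_univ 0,
    show (univ : Finset (Fin 5)) = {4, 1, 2, 0, 3} by decide,
    lmarginal_insert' _ measurable_f₀ (by decide), lintegral_f₀_update,
    lmarginal_insert' _ measurable_f₁ (by decide), lintegral_f₁_update,
    lmarginal_insert' _ measurable_f₂ (by decide), lintegral_f₂_update,
    lmarginal_insert' _ measurable_f₃ (by decide), lintegral_f₃_update,
    lmarginal_singleton]
  exact lintegral_f₄_update 0
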